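/- arXiv:2604.05542 — 2 statements merged into one kernel-verified Lean document; each statement's English description precedes it below -/
import Mathlib

section
/- Let ℰ_m = {t ∈ ℂ^{n+1} : |t₁|^{2m} + Σ_{j=2}^{n+1} |t_j|² < 1} be the egg domain with m ∈ ℕ, m ≥ 1. Then its volume is vol(ℰ_m) = π^{n+1} Γ(1/m) / (m Γ(n+1+1/m)). -/
/-!
By Fubini in the first coordinate, the slice of `ℰ_m` over `t₁ = z` is the Euclidean ball of
`ℂⁿ` of squared radius `1 - |z|^{2m}`, of volume `πⁿ/n! · (1 - |z|^{2m})ⁿ`. Polar coordinates in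
`ℂ` turn the remaining integral into `2π ∫₀¹ r (1 - r^{2m})ⁿ dr`, and integrating
`d/dr [r² (1 - r^{2m})ⁿ⁺¹]` over `[0, 1]` gives a recursion in `n` whose solution is the Beta value
`Γ(1/m) n! / (2m Γ(n + 1 + 1/m))`.
-/

open MeasureTheory

/-- The egg domain `ℰ_m = {t ∈ ℂ^{n+1} : |t₁|^{2m} + Σ_{j=2}^{n+1} |t_j|² < 1}`. -/
def eggDomain (n m : ℕ) : Set (Fin (n + 1) → ℂ) :=
  {t | ‖t 0‖ ^ (2 * m) + ∑ j ∈ Finset.univ.erase 0, ‖t j‖ ^ 2 < 1}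

open Set Real
open scoped Nat

theorem integral_mul_one_sub_pow_succ (k n : ℕ) :
    (2 + k * (n + 1)) * ∫ y in (0:ℝ)..1, y * (1 - y ^ k) ^ (n + 1) =
      k * (n + 1) * ∫ y in (0:ℝ)..1, y * (1 - y ^ k) ^ n := by
  have hderiv (y : ℝ) : HasDerivAt (fun y : ℝ => y ^ 2 * (1 - y ^ k) ^ (n + 1))
      (2 * (y * (1 - y ^ k) ^ (n + 1)) -
        k * (n + 1) * (y * (1 - y ^ k) ^ n - y * (1 - y ^ k) ^ (n + 1))) y := by
    refine ((hasDerivAt_pow 2 y).fun_mul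
      (((hasDerivAt_pow k y).const_sub 1).fun_pow (n + 1))).congr_deriv ?_
    rcases k with _ | k
    · simp
    · simp only [Nat.cast_add, Nat.cast_one, Nat.cast_ofNat, add_tsub_cancel_right, pow_succ]
      ring
  have hFTC := intervalIntegral.integral_eq_sub_of_hasDerivAt (fun y _ => hderiv y)
    (Continuous.intervalIntegrable (by fun_prop) 0 1)
  have hint (j : ℕ) : IntervalIntegrable (fun y : ℝ => y * (1 - y ^ k) ^ j) volume 0 1 :=
    Continuous.intervalIntegrable (by fun_prop) _ _
  rw [intervalIntegral.integral_sub ((hint _).const_mul _) (((hint _).sub (hint _)).const_mul _),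
    intervalIntegral.integral_const_mul, intervalIntegral.integral_const_mul,
    intervalIntegral.integral_sub (hint _) (hint _)] at hFTC
  norm_num at hFTC
  linear_combination hFTC

theorem integral_mul_one_sub_pow {k : ℕ} (hk : 0 < k) (n : ℕ) :
    ∫ y in (0:ℝ)..1, y * (1 - y ^ k) ^ n =
      Gamma (2 / k) * n ! / (k * Gamma (n + 1 + 2 / k)) := by
  have ha : (0 : ℝ) < 2 / k := by positivity
  induction n with
  | zero =>
    simp only [pow_zero, mul_one, integral_id, Nat.cast_zero, zero_add, Nat.factorial_zero]
    rw [add_comm, Gamma_add_one ha.ne']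
    field_simp
    norm_num
  | succ n ih =>
    have hrec := integral_mul_one_sub_pow_succ k n
    have hGamma : Gamma (↑(n + 1) + 1 + 2 / k) = (n + 1 + 2 / k) * Gamma (n + 1 + 2 / k) := by
      rw [← Gamma_add_one (by positivity)]; push_cast; ring_nf
    have : (0:ℝ) < Gamma (n + 1 + 2 / k) := Gamma_pos_of_pos (by positivity)
    rw [ih] at hrec
    rw [hGamma, Nat.factorial_succ, eq_div_iff (by positivity)]
    field_simp at hrec ⊢
    push_cast
    linear_combination hrec

theorem volume_setOf_sum_norm_sq_lt {ι : Type*} [Fintype ι] {R : ℝ} (hR : 0 < R) :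
    volume {y : ι → ℂ | ∑ j, ‖y j‖ ^ 2 < R} =
      ENNReal.ofReal (π ^ Fintype.card ι / (Fintype.card ι)! * R ^ Fintype.card ι) := by
  rcases isEmpty_or_nonempty ι with hι | hι
  · simp [hR, volume_pi]
  have hball : {y : ι → ℂ | ∑ j, ‖y j‖ ^ 2 < R} =
      {y : ι → ℂ | (∑ j, ‖y j‖ ^ (2 : ℝ)) ^ (1 / (2 : ℝ)) < √R} := by
    ext y
    simp only [mem_ofPred_eq, rpow_two, ← sqrt_eq_rpow]
    exact (sqrt_lt_sqrt_iff (by positivity)).symm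
  rw [hball, Complex.volume_sum_rpow_lt (ι := ι) one_le_two,
    ← ENNReal.ofReal_pow (sqrt_nonneg R), ← ENNReal.ofReal_mul (by positivity), pow_mul,
    sq_sqrt hR.le]
  norm_num [Gamma_two, mul_div_assoc, ← Gamma_nat_eq_factorial]
  ring_nf

theorem Complex.integral_indicator_Iio_norm (f : ℝ → ℝ) {R : ℝ} (hR : 0 ≤ R) :
    ∫ z : ℂ, (Iio R).indicator f ‖z‖ = 2 * π * ∫ r in 0..R, r * f r := by
  have hmul : (fun r => r * (Iio R).indicator f r) = (Iio R).indicator (fun r => r * f r) :=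
    funext fun r => (indicator_mul_right _ id f).symm
  simp only [integral_fun_norm_addHaar, Complex.finrank_real_complex, measureReal_def,
    Complex.volume_ball, smul_eq_mul, Nat.reduceSub, pow_one]
  rw [hmul, setIntegral_indicator measurableSet_Iio, Ioi_inter_Iio,
    ← integral_Ioc_eq_integral_Ioo, ← intervalIntegral.integral_of_le hR]
  simp [mul_assoc]

theorem integrable_indicator_Iio_norm {E : Type*} [NormedAddCommGroup E] [MeasurableSpace E]
    [BorelSpace E] [ProperSpace E] (μ : Measure E) [IsFiniteMeasureOnCompacts μ]
    {f : ℝ → ℝ} (hf : Continuous f) (R : ℝ) :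
    Integrable (fun z : E => (Iio R).indicator f ‖z‖) μ := by
  have hcomp : (fun z : E => (Iio R).indicator f ‖z‖) = (norm ⁻¹' Iio R).indicator (f ∘ norm) :=
    funext fun _ => (indicator_comp_right _).symm
  rw [hcomp, integrable_indicator_iff (measurableSet_Iio.preimage measurable_norm)]
  exact ((hf.comp continuous_norm).continuousOn.integrableOn_compact
    (isCompact_closedBall 0 R)).mono_set fun z hz => mem_closedBall_zero_iff.2 hz.le

theorem volume_setOf_norm_pow_add_sum_norm_sq_lt_one {k : ℕ} (hk : k ≠ 0) (n : ℕ) (z : ℂ) :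
    volume {y : Fin n → ℂ | ‖z‖ ^ k + ∑ j, ‖y j‖ ^ 2 < 1} =
      ENNReal.ofReal (π ^ n / n ! * (Iio 1).indicator (fun r => (1 - r ^ k) ^ n) ‖z‖) := by
  have hset : {y : Fin n → ℂ | ‖z‖ ^ k + ∑ j, ‖y j‖ ^ 2 < 1} =
      {y | ∑ j, ‖y j‖ ^ 2 < 1 - ‖z‖ ^ k} := by
    ext y
    simp only [mem_ofPred_eq, lt_sub_iff_add_lt']
  rw [hset]
  by_cases hz : ‖z‖ < 1
  · have hpos : 0 < 1 - ‖z‖ ^ k := sub_pos.2 (pow_lt_one₀ (norm_nonneg z) hz hk)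
    rw [indicator_of_mem (mem_Iio.2 hz), volume_setOf_sum_norm_sq_lt hpos, Fintype.card_fin]
  · have hempty : {y : Fin n → ℂ | ∑ j, ‖y j‖ ^ 2 < 1 - ‖z‖ ^ k} = ∅ := by
      refine eq_empty_iff_forall_notMem.2 fun y (hy : ∑ j, ‖y j‖ ^ 2 < 1 - ‖z‖ ^ k) => ?_
      have : 1 ≤ ‖z‖ ^ k := one_le_pow₀ (not_lt.1 hz)
      have : 0 ≤ ∑ j, ‖y j‖ ^ 2 := by positivity
      linarith
    rw [indicator_of_notMem (notMem_Iio.2 (not_lt.1 hz)), hempty, measure_empty, mul_zero,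
      ENNReal.ofReal_zero]

theorem volume_setOf_norm_fst_pow_add_sum_norm_snd_sq_lt_one {k : ℕ} (hk : 0 < k) (n : ℕ) :
    volume {p : ℂ × (Fin n → ℂ) | ‖p.1‖ ^ k + ∑ j, ‖p.2 j‖ ^ 2 < 1} =
      ENNReal.ofReal (2 * π ^ (n + 1) * Gamma (2 / k) / (k * Gamma (n + 1 + 2 / k))) := by
  set f : ℝ → ℝ := fun r => (1 - r ^ k) ^ n
  have hf_nonneg (z : ℂ) : 0 ≤ (Iio 1).indicator f ‖z‖ := by
    by_cases hz : ‖z‖ < 1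
    · rw [indicator_of_mem (mem_Iio.2 hz)]
      exact pow_nonneg (sub_nonneg.2 (pow_le_one₀ (norm_nonneg z) hz.le)) n
    · rw [indicator_of_notMem (notMem_Iio.2 (not_lt.1 hz))]
  rw [Measure.volume_eq_prod, Measure.prod_apply (measurableSet_lt (by fun_prop) measurable_const)]
  simp_rw [preimage_ofPred_eq, volume_setOf_norm_pow_add_sum_norm_sq_lt_one hk.ne']
  rw [← ofReal_integral_eq_lintegral_ofReal
      ((integrable_indicator_Iio_norm volume (by fun_prop) 1).const_mul _)
      (ae_of_all _ fun z => mul_nonneg (by positivity) (hf_nonneg z)),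
    integral_const_mul, Complex.integral_indicator_Iio_norm f zero_le_one,
    integral_mul_one_sub_pow hk]
  congr 1
  have : (0:ℝ) < Gamma (n + 1 + 2 / k) := Gamma_pos_of_pos (by positivity)
  field_simp
  ring

theorem eggDomain_eq_preimage (n m : ℕ) :
    eggDomain n m = MeasurableEquiv.piFinSuccAbove (fun _ => ℂ) 0 ⁻¹'
      {p : ℂ × (Fin n → ℂ) | ‖p.1‖ ^ (2 * m) + ∑ j, ‖p.2 j‖ ^ 2 < 1} := by
  ext t
  simp [eggDomain, MeasurableEquiv.piFinSuccAbove, Finset.sum_erase_eq_sub, Fin.sum_univ_succ,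
    Fin.tail]

/-- **Volume of the egg domain:**
`vol(ℰ_m) = π^{n+1} Γ(1/m) / (m Γ(n+1+1/m))`. -/
theorem volume_eggDomain (n m : ℕ) (hm : 1 ≤ m) :
    volume (eggDomain n m) =
      ENNReal.ofReal (Real.pi ^ (n + 1) * Real.Gamma (1 / m) /
        (m * Real.Gamma ((n : ℝ) + 1 + 1 / m))) := by
  rw [eggDomain_eq_preimage,
    (volume_preserving_piFinSuccAbove (fun _ => ℂ) 0).measure_preimage_equiv,
    volume_setOf_norm_fst_pow_add_sum_norm_snd_sq_lt_one (by omega)]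
  have hm' : (m : ℝ) ≠ 0 := by positivity
  have htwo : (2 : ℝ) / ↑(2 * m) = 1 / m := by push_cast; field_simp
  rw [htwo]
  congr 1
  push_cast
  field_simp
end

section
/- Define for m ≥ 1 the quantity J_m(0) = (n+1+1/m)^n · [Γ(n+1+2/m) Γ(1/m)² / (Γ(n+1+1/m)² Γ(2/m))] · π^{n+1}/m. Then J_m(0) is strictly decreasing in m ∈ ℕ; in particular J_m(0) < J_1(0) = (n+2)^{n+1} π^{n+1}/(n+1)! for all integers m > 1. -/
/-!
With `x = 1 / m`, the recurrence `Γ(s + 1) = s Γ(s)` factors the invariant as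
`J_m(0) = 2 π^{n+1} ∏_{a=1}^{n} φ_a(x)` with `φ_a(x) = (a+1+x)^a (a+2x) / (a+x)^{a+1}`
(the powers `(a+1+x)^a / (a+x)^{a-1}` telescope to `(n+1+x)^n`).
Each factor is strictly increasing on `[0, 1]`: its logarithmic derivative is
`a (1 - x) / ((a+x)(a+1+x)(a+2x))`. Hence `J_m(0)` strictly decreases as `m` grows.
-/

/-- The Bergman canonical invariant of the egg domain
`ℰ_m = {|t₁|^{2m} + Σ_{j=2}^{n+1}|t_j|² < 1} ⊂ ℂ^{n+1}` at the origin. -/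
noncomputable def eggInvariant (n m : ℕ) : ℝ :=
  ((n : ℝ) + 1 + 1 / m) ^ n *
    (Real.Gamma ((n : ℝ) + 1 + 2 / m) * Real.Gamma (1 / m) ^ 2 /
      (Real.Gamma ((n : ℝ) + 1 + 1 / m) ^ 2 * Real.Gamma (2 / m))) *
    Real.pi ^ (n + 1) / m

open Real Finset Set

noncomputable def eggFactor (a : ℕ) (x : ℝ) : ℝ :=
  ((a : ℝ) + 1 + x) ^ a * (a + 2 * x) / (a + x) ^ (a + 1)

noncomputable def logEggFactor (a x : ℝ) : ℝ :=
  a * log (a + 1 + x) + log (a + 2 * x) - (a + 1) * log (a + x)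

lemma eggInvariant_zero {m : ℕ} (hm : m ≠ 0) : eggInvariant 0 m = 2 * π := by
  obtain ⟨x, hx, hmx⟩ : ∃ x : ℝ, 0 < x ∧ (m : ℝ) = x⁻¹ := ⟨(m : ℝ)⁻¹, by positivity, by simp⟩
  have := (Gamma_pos_of_pos hx).ne'
  have := (Gamma_pos_of_pos (by positivity : 0 < 2 * x)).ne'
  simp only [eggInvariant, hmx, div_inv_eq_mul, one_mul, CharP.cast_eq_zero, zero_add, pow_zero,
    add_comm (1 : ℝ), Gamma_add_one hx.ne', Gamma_add_one (by positivity : 2 * x ≠ 0)]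
  field_simp

lemma eggInvariant_succ (n : ℕ) {m : ℕ} (hm : m ≠ 0) :
    eggInvariant (n + 1) m = π * eggFactor (n + 1) (1 / m) * eggInvariant n m := by
  obtain ⟨x, hx, hmx⟩ : ∃ x : ℝ, 0 < x ∧ (m : ℝ) = x⁻¹ := ⟨(m : ℝ)⁻¹, by positivity, by simp⟩
  have := (Gamma_pos_of_pos hx).ne'
  have := (Gamma_pos_of_pos (by positivity : 0 < 2 * x)).ne'
  have := (Gamma_pos_of_pos (by positivity : 0 < (n : ℝ) + 1 + x)).ne'
  have := (Gamma_pos_of_pos (by positivity : 0 < (n : ℝ) + 1 + 2 * x)).ne'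
  simp only [eggInvariant, eggFactor, hmx, div_inv_eq_mul, one_mul, Nat.cast_add, Nat.cast_one]
  rw [show (n : ℝ) + 1 + 1 + x = n + 1 + x + 1 by ring,
    show (n : ℝ) + 1 + 1 + 2 * x = n + 1 + 2 * x + 1 by ring,
    Gamma_add_one (by positivity), Gamma_add_one (by positivity)]
  field_simp
  ring

lemma eggInvariant_eq_prod (n : ℕ) {m : ℕ} (hm : m ≠ 0) :
    eggInvariant n m = 2 * π ^ (n + 1) * ∏ k ∈ range n, eggFactor (k + 1) (1 / m) := by
  induction n with
  | zero => simp [eggInvariant_zero hm]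
  | succ n ih => rw [eggInvariant_succ n hm, ih, prod_range_succ]; ring

lemma hasDerivAt_logEggFactor {a x : ℝ} (ha : 0 < a) (hx : 0 ≤ x) :
    HasDerivAt (logEggFactor a) (a * (1 - x) / ((a + x) * (a + 1 + x) * (a + 2 * x))) x := by
  have h₁ := ((hasDerivAt_id x).const_add (a + 1)).log (by positivity)
  have h₂ := (((hasDerivAt_id x).const_mul 2).const_add a).log (by positivity)
  have h₃ := ((hasDerivAt_id x).const_add a).log (by positivity)
  refine ((h₁.const_mul a).fun_add h₂ |>.fun_sub (h₃.const_mul (a + 1))).congr_deriv ?_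
  simp only [id]
  field_simp
  ring

lemma logEggFactor_strictMonoOn {a : ℝ} (ha : 0 < a) :
    StrictMonoOn (logEggFactor a) (Icc 0 1) := by
  refine strictMonoOn_of_hasDerivWithinAt_pos (convex_Icc 0 1)
    (fun x hx ↦ (hasDerivAt_logEggFactor ha hx.1).continuousAt.continuousWithinAt)
    (fun x hx ↦ (hasDerivAt_logEggFactor ha (interior_subset hx).1).hasDerivWithinAt)
    fun x hx ↦ ?_
  rw [interior_Icc] at hx
  have : 0 < 1 - x := by linarith [hx.2]
  have := hx.1
  positivity

lemma exp_logEggFactor {a : ℕ} (ha : 0 < a) {x : ℝ} (hx : 0 ≤ x) :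
    exp (logEggFactor a x) = eggFactor a x := by
  have : (0 : ℝ) < a := by exact_mod_cast ha
  have e₁ : exp (a * log (a + 1 + x)) = (a + 1 + x) ^ a := by
    rw [← log_pow, exp_log (by positivity)]
  have e₂ : exp ((a + 1) * log (a + x)) = (a + x) ^ (a + 1) := by
    rw [← Nat.cast_succ, ← log_pow, exp_log (by positivity)]
  rw [logEggFactor, exp_sub, exp_add, e₁, e₂, exp_log (by positivity), eggFactor]

lemma eggFactor_strictMonoOn {a : ℕ} (ha : 0 < a) : StrictMonoOn (eggFactor a) (Icc 0 1) := by
  intro x hx y hy hxy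
  rw [← exp_logEggFactor ha hx.1, ← exp_logEggFactor ha hy.1]
  exact exp_lt_exp.2 (logEggFactor_strictMonoOn (by exact_mod_cast ha) hx hy hxy)

lemma eggFactor_pos {a : ℕ} (ha : 0 < a) {x : ℝ} (hx : 0 ≤ x) : 0 < eggFactor a x :=
  exp_logEggFactor ha hx ▸ exp_pos _

lemma eggInvariant_one (n : ℕ) :
    eggInvariant n 1 = ((n : ℝ) + 2) ^ (n + 1) * π ^ (n + 1) / (n + 1).factorial := by
  have h₁ : Gamma ((n : ℝ) + 1 + 1) = (n + 1).factorial := by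
    exact_mod_cast Gamma_nat_eq_factorial (n + 1)
  have h₂ : Gamma ((n : ℝ) + 1 + 2) = (n + 2) * (n + 1).factorial := by
    rw [show (n : ℝ) + 1 + 2 = (n + 1 + 1 : ℕ) + 1 by push_cast; ring, Gamma_nat_eq_factorial,
      Nat.factorial_succ]
    push_cast
    ring
  have : ((n + 1).factorial : ℝ) ≠ 0 := by positivity
  simp only [eggInvariant, Nat.cast_one, div_one, h₁, h₂, Gamma_two, Gamma_one]
  field_simp
  ring

/-- **Strict monotonicity of the egg-domain Bergman invariant:** `J_m(0)` is strictly
decreasing in `m ∈ ℕ`, `m ≥ 1`; in particular `J_m(0) < J_1(0) = (n+2)^{n+1} π^{n+1}/(n+1)!`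
for all integers `m > 1`. -/
theorem eggInvariant_strict_anti (n : ℕ) (hn : 1 ≤ n) :
    (∀ m₁ m₂ : ℕ, 1 ≤ m₁ → m₁ < m₂ → eggInvariant n m₂ < eggInvariant n m₁) ∧
    eggInvariant n 1 = ((n : ℝ) + 2) ^ (n + 1) * Real.pi ^ (n + 1) / (Nat.factorial (n + 1)) ∧
    ∀ m : ℕ, 1 < m → eggInvariant n m < eggInvariant n 1 := by
  have anti : ∀ m₁ m₂ : ℕ, 1 ≤ m₁ → m₁ < m₂ → eggInvariant n m₂ < eggInvariant n m₁ := by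
    intro m₁ m₂ hm₁ hm₁₂
    have mem : ∀ m : ℕ, 1 ≤ m → (1 / m : ℝ) ∈ Set.Icc 0 1 := fun m hm ↦
      ⟨by positivity, div_le_one_of_le₀ (by exact_mod_cast hm) (by positivity)⟩
    have lt : (1 / m₂ : ℝ) < 1 / m₁ :=
      one_div_lt_one_div_of_lt (by exact_mod_cast hm₁) (by exact_mod_cast hm₁₂)
    rw [eggInvariant_eq_prod n (by omega), eggInvariant_eq_prod n (by omega)]
    gcongr ?_ * ?_
    refine prod_lt_prod_of_nonempty (fun k _ ↦ eggFactor_pos k.succ_pos (mem m₂ (by omega)).1)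
      (fun k _ ↦ eggFactor_strictMonoOn k.succ_pos (mem m₂ (by omega)) (mem m₁ hm₁) lt)
      (nonempty_range_iff.2 (by omega))
  exact ⟨anti, eggInvariant_one n, fun m hm ↦ anti 1 m le_rfl hm⟩
end
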